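/- arXiv:1503.07555 — 2 statements merged into one kernel-verified Lean document; each statement's English description precedes it below -/
import Mathlib

section
/- Let 1 < β < e and α = β^(1/β), and let f(x) = α^x. Then for every x with 0 < x < β, the sequence of iterates f^∘n(x) is strictly increasing and converges to β as n → ∞. -/
/-! The map `f(x) = α^x` is increasing, continuous and fixes `β`. Since `ln β < 1`, the graph of
`f` lies strictly above the diagonal on `(0, β)`: with `u = x / β` this is `ln u < (u - 1) ln β`,
which follows from `ln u < u - 1`. Hence the orbit of `x ∈ (0, β)` increases, stays below `β`,
and its limit is a fixed point of `f` in `(0, β]`, which can only be `β`. -/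

open Real Filter Function Set Topology

theorem StrictMono.mapsTo_Ioo_of_lt_map {X : Type*} [Preorder X] {f : X → X} {a b : X}
    (hf : StrictMono f) (hb : IsFixedPt f b) (hlt : ∀ y ∈ Ioo a b, y < f y) :
    MapsTo f (Ioo a b) (Ioo a b) :=
  fun y hy => ⟨hy.1.trans (hlt y hy), hb ▸ hf hy.2⟩

theorem StrictMono.tendsto_iterate_of_lt_map {X : Type*} [ConditionallyCompleteLinearOrder X]
    [TopologicalSpace X] [OrderTopology X] {f : X → X} {a b : X} (hf : StrictMono f)
    (hfc : Continuous f) (hb : IsFixedPt f b) (hlt : ∀ y ∈ Ioo a b, y < f y) {x : X} (hx : x ∈ Ioo a b) :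
    StrictMono (fun n => f^[n] x) ∧ Tendsto (fun n => f^[n] x) atTop (𝓝 b) := by
  have hmaps : ∀ n, f^[n] x ∈ Ioo a b := fun n => (hf.mapsTo_Ioo_of_lt_map hb hlt).iterate n hx
  have hmono : StrictMono (fun n => f^[n] x) := hf.strictMono_iterate_of_lt_map (hlt x hx)
  have hbdd : BddAbove (range fun n => f^[n] x) := ⟨b, forall_mem_range.2 fun n => (hmaps n).2.le⟩
  have htend := tendsto_atTop_ciSup hmono.monotone hbdd
  set L := ⨆ n, f^[n] x
  have hfix : IsFixedPt f L := isFixedPt_of_tendsto_iterate htend hfc.continuousAt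
  have haL : a < L := (hmaps 0).1.trans_le (le_ciSup hbdd 0)
  have hLb : L ≤ b := ciSup_le fun n => (hmaps n).2.le
  obtain rfl : L = b := hLb.eq_of_not_lt fun h => (hlt L ⟨haL, h⟩).ne' hfix
  exact ⟨hmono, htend⟩

theorem Real.lt_rpow_one_div_self_rpow {β y : ℝ} (hy : 0 < y) (hyβ : y < β) (hβe : β < exp 1) :
    y < (β ^ (1 / β)) ^ y := by
  have hβ : 0 < β := hy.trans hyβ
  have hlogβ : log β < 1 := (log_lt_iff_lt_exp hβ).2 hβe
  set u := y / β
  have hu : u < 1 := (div_lt_one hβ).2 hyβ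
  have hlogu : log u < u - 1 := log_lt_sub_one_of_pos (by positivity) hu.ne
  have hlogy : log y = log u + log β := by
    rw [log_div hy.ne' hβ.ne', sub_add_cancel]
  have hpow : (β ^ (1 / β)) ^ y = exp (log β * u) := by
    rw [← rpow_mul hβ.le, rpow_def_of_pos hβ, one_div_mul_eq_div]
  rw [hpow, ← exp_log hy, exp_lt_exp, hlogy]
  nlinarith [mul_pos (sub_pos.2 hu) (sub_pos.2 hlogβ)]

theorem stmt_1 (β : ℝ) (hβ1 : 1 < β) (hβe : β < Real.exp 1)
    (α : ℝ) (hα : α = β ^ (1 / β))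
    (f : ℝ → ℝ) (hf : ∀ x : ℝ, f x = α ^ x) :
    ∀ x : ℝ, 0 < x → x < β →
      StrictMono (fun n : ℕ => f^[n] x) ∧
      Tendsto (fun n : ℕ => f^[n] x) atTop (nhds β) := by
  intro x hx0 hxβ
  have hβ : 0 < β := one_pos.trans hβ1
  obtain rfl : f = fun t => α ^ t := funext hf
  subst hα
  have hα1 : 1 < β ^ (1 / β) := one_lt_rpow hβ1 (by positivity)
  have hfix : IsFixedPt (fun t => (β ^ (1 / β)) ^ t) β := by
    simp only [IsFixedPt, one_div, rpow_inv_rpow hβ.le hβ.ne']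
  exact (strictMono_rpow_of_base_gt_one hα1).tendsto_iterate_of_lt_map
    (continuous_const_rpow (by positivity)) hfix
    (fun y hy => lt_rpow_one_div_self_rpow hy.1 hy.2 hβe) ⟨hx0, hxβ⟩
end

section
/- Let 1 < β < e, α = β^(1/β), and f(x) = α^x. Then for all x ∈ (0, β), f(x) > x, and f maps the interval (0, β) into itself. -/
open Real Set

theorem Real.mul_lt_rpow_of_le_exp_one {b t : ℝ} (hb : 0 < b) (hbe : b ≤ exp 1) (ht : t < 1) :
    b * t < b ^ t := by
  have hlog : log b ≤ 1 := by simpa using log_le_log hb hbe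
  have hpow : t < b ^ (t - 1) :=
    calc t < exp (t - 1) := by linarith [add_one_lt_exp (sub_ne_zero.mpr ht.ne)]
      _ ≤ exp (log b * (t - 1)) := exp_le_exp.mpr (by nlinarith)
      _ = b ^ (t - 1) := (rpow_def_of_pos hb _).symm
  calc b * t < b * b ^ (t - 1) := mul_lt_mul_of_pos_left hpow hb
    _ = b ^ t := by rw [rpow_sub_one hb.ne', mul_div_cancel₀ _ hb.ne']

theorem stmt_2 (β : ℝ) (hβ1 : 1 < β) (hβe : β < Real.exp 1)
    (α : ℝ) (hα : α = β ^ (1 / β))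
    (f : ℝ → ℝ) (hf : ∀ x : ℝ, f x = α ^ x) :
    ∀ x ∈ Set.Ioo (0 : ℝ) β, x < f x ∧ f x ∈ Set.Ioo (0 : ℝ) β := by
  rintro x ⟨-, hxβ⟩
  have hβ0 : 0 < β := one_pos.trans hβ1
  have ht : x / β < 1 := (div_lt_one hβ0).mpr hxβ
  rw [hf, hα, ← rpow_mul hβ0.le, one_div_mul_eq_div]
  refine ⟨?_, rpow_pos_of_pos hβ0 _, ?_⟩
  · calc x = β * (x / β) := (mul_div_cancel₀ x hβ0.ne').symm
      _ < β ^ (x / β) := mul_lt_rpow_of_le_exp_one hβ0 hβe.le ht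
  · calc β ^ (x / β) < β ^ (1 : ℝ) := rpow_lt_rpow_of_exponent_lt hβ1 ht
      _ = β := rpow_one β
end
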